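/- arXiv:2207.12674 — 2 statements merged into one kernel-verified Lean document; each statement's English description precedes it below -/
import Mathlib

section
/- Let A_opt = A + λ_opt I be symmetric positive semidefinite, A_opt x_opt = -g, and let x_k with residual r_k = (A+λ_k I)x_k + g satisfying r_k ⊥ x_k (so that ||A_opt(x_k - x_opt)||^2 = ||r_k||^2 + (λ_opt - λ_k)^2 ||x_k||^2). Then ||r_k||^2 ≤ 2 ||A_opt|| (f(x_k) - f(x_opt)), where f(x) = (1/2)x^T A x + g^T x and ||x_k|| = ||x_opt|| = Δ. -/
/-!
With `d = x_k - x_opt`, the optimality condition gives `A_opt d = r_k + (λ_opt - λ_k) x_k`, so by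
`r_k ⊥ x_k` we get `‖r_k‖² ≤ ‖A_opt d‖²`. For positive semidefinite `M` one has
`‖M d‖² ≤ ‖M‖ dᵀ M d`, and `dᵀ A_opt d = 2 (f(x_k) - f(x_opt))`.
-/

open Matrix

noncomputable def fobj {n : ℕ} (A : Matrix (Fin n) (Fin n) ℝ) (g x : Fin n → ℝ) : ℝ :=
  (1/2) * (x ⬝ᵥ A.mulVec x) + g ⬝ᵥ x

open scoped Matrix.Norms.L2Operator MatrixOrder

namespace Matrix

variable {m : Type*} [Fintype m]

lemma dotProduct_self_eq_norm_toLp_sq (v : m → ℝ) : v ⬝ᵥ v = ‖WithLp.toLp 2 v‖ ^ 2 := by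
  rw [← real_inner_self_eq_norm_sq, EuclideanSpace.inner_toLp_toLp, star_trivial]

lemma add_smul_dotProduct_self_of_dotProduct_eq_zero {R : Type*} [CommRing R] {r x : m → R}
    (h : r ⬝ᵥ x = 0) (c : R) :
    (r + c • x) ⬝ᵥ (r + c • x) = r ⬝ᵥ r + c ^ 2 * (x ⬝ᵥ x) := by
  simp only [add_dotProduct, dotProduct_add, smul_dotProduct, dotProduct_smul, h,
    dotProduct_comm x r, smul_eq_mul]
  ring

variable [DecidableEq m]

lemma add_smul_one_mulVec_sub_eq {R : Type*} [CommRing R] (A : Matrix m m R) {g x y r : m → R}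
    {μ ν : R} (hy : (A + μ • 1) *ᵥ y = -g) (hr : r = (A + ν • 1) *ᵥ x + g) :
    (A + μ • 1) *ᵥ (x - y) = r + (μ - ν) • x := by
  rw [mulVec_sub, hy, hr]
  simp only [add_mulVec, smul_mulVec, one_mulVec]
  module

/-- Write `M = S * S` with `S = √M`; then `‖M v‖ ≤ ‖S‖ ‖S v‖`, `‖S‖² = ‖M‖` and
`‖S v‖² = vᵀ M v`. -/
lemma PosSemidef.mulVec_dotProduct_mulVec_le {M : Matrix m m ℝ} (hM : M.PosSemidef)
    (v : m → ℝ) : (M *ᵥ v) ⬝ᵥ (M *ᵥ v) ≤ ‖M‖ * (v ⬝ᵥ M *ᵥ v) := by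
  set S := CFC.sqrt M
  have hS : Sᵀ = S := (CFC.sqrt_nonneg M).isSelfAdjoint
  have hSS : S * S = M := CFC.sqrt_mul_sqrt_self M hM.nonneg
  have hnorm : ‖M‖ = ‖S‖ ^ 2 := by
    rw [CFC.norm_sqrt M hM.nonneg, Real.sq_sqrt (norm_nonneg _)]
  have hform : v ⬝ᵥ M *ᵥ v = (S *ᵥ v) ⬝ᵥ (S *ᵥ v) := by
    rw [← hSS, ← mulVec_mulVec, dotProduct_mulVec, ← mulVec_transpose, hS]
  have hop : ‖WithLp.toLp 2 (S *ᵥ (S *ᵥ v))‖ ≤ ‖S‖ * ‖WithLp.toLp 2 (S *ᵥ v)‖ :=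
    S.l2_opNorm_mulVec (WithLp.toLp 2 _)
  calc (M *ᵥ v) ⬝ᵥ (M *ᵥ v) = ‖WithLp.toLp 2 (S *ᵥ (S *ᵥ v))‖ ^ 2 := by
        rw [mulVec_mulVec, hSS, dotProduct_self_eq_norm_toLp_sq]
    _ ≤ (‖S‖ * ‖WithLp.toLp 2 (S *ᵥ v)‖) ^ 2 := by gcongr
    _ = ‖M‖ * (v ⬝ᵥ M *ᵥ v) := by rw [hnorm, hform, dotProduct_self_eq_norm_toLp_sq]; ring

end Matrix

theorem stmt5_general {n : ℕ} (A : Matrix (Fin n) (Fin n) ℝ)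
    (g : Fin n → ℝ) (Δ : ℝ) (lopt lk : ℝ)
    (xopt xk : Fin n → ℝ)
    (hpsd : (A + lopt • 1).PosSemidef)
    (heq : (A + lopt • 1).mulVec xopt = -g)
    (hxk : Real.sqrt (xk ⬝ᵥ xk) = Δ)
    (rk : Fin n → ℝ) (hrk : rk = (A + lk • 1).mulVec xk + g)
    (horth : rk ⬝ᵥ xk = 0)
    (hquad : ∀ x : Fin n → ℝ, Real.sqrt (x ⬝ᵥ x) = Δ →
      fobj A g x - fobj A g xopt
        = (1/2) * ((x - xopt) ⬝ᵥ (A + lopt • 1).mulVec (x - xopt))) :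
    rk ⬝ᵥ rk ≤ 2 * ‖(Matrix.toEuclideanCLM (𝕜 := ℝ) (A + lopt • 1) : EuclideanSpace ℝ (Fin n) →L[ℝ] EuclideanSpace ℝ (Fin n))‖ *
      (fobj A g xk - fobj A g xopt) := by
  set B := A + lopt • 1
  have hxk_sq : 0 ≤ xk ⬝ᵥ xk := by simpa using dotProduct_star_self_nonneg xk
  rw [hquad xk hxk, l2_opNorm_toEuclideanCLM]
  calc rk ⬝ᵥ rk ≤ rk ⬝ᵥ rk + (lopt - lk) ^ 2 * (xk ⬝ᵥ xk) :=
        le_add_of_nonneg_right (by positivity)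
    _ = (B *ᵥ (xk - xopt)) ⬝ᵥ (B *ᵥ (xk - xopt)) := by
        rw [add_smul_one_mulVec_sub_eq A heq hrk,
          add_smul_dotProduct_self_of_dotProduct_eq_zero horth]
    _ ≤ ‖B‖ * ((xk - xopt) ⬝ᵥ B *ᵥ (xk - xopt)) := hpsd.mulVec_dotProduct_mulVec_le _
    _ = 2 * ‖B‖ * ((1 / 2) * ((xk - xopt) ⬝ᵥ B *ᵥ (xk - xopt))) := by ring

theorem stmt5 {n : ℕ} (A : Matrix (Fin n) (Fin n) ℝ) (hA : A.IsSymm)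
    (g : Fin n → ℝ) (hg : g ≠ 0) (Δ : ℝ) (hΔ : 0 < Δ) (lopt lk : ℝ)
    (xopt xk : Fin n → ℝ)
    (hpsd : (A + lopt • 1).PosSemidef)
    (heq : (A + lopt • 1).mulVec xopt = -g)
    (hxopt : Real.sqrt (xopt ⬝ᵥ xopt) = Δ)
    (hxk : Real.sqrt (xk ⬝ᵥ xk) = Δ)
    (rk : Fin n → ℝ) (hrk : rk = (A + lk • 1).mulVec xk + g)
    (horth : rk ⬝ᵥ xk = 0)
    (hquad : ∀ x : Fin n → ℝ, Real.sqrt (x ⬝ᵥ x) = Δ →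
      fobj A g x - fobj A g xopt
        = (1/2) * ((x - xopt) ⬝ᵥ (A + lopt • 1).mulVec (x - xopt))) :
    rk ⬝ᵥ rk ≤ 2 * ‖(Matrix.toEuclideanCLM (𝕜 := ℝ) (A + lopt • 1) : EuclideanSpace ℝ (Fin n) →L[ℝ] EuclideanSpace ℝ (Fin n))‖ *
      (fobj A g xk - fobj A g xopt) :=
  stmt5_general A g Δ lopt lk xopt xk hpsd heq hxk rk hrk horth hquad
end

section
/- Let T_k + λ_k I be symmetric tridiagonal positive definite with condition number κ_k, h_k = -||g|| (T_k+λ_k I)^{-1} e_1, and β_k > 0. Then β_k |e_k^T h_k| ≤ 2 β_k ||h_k|| ((√κ_k - 1)/(√κ_k + 1))^{k-1}. -/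
/-!
Write `A = T + λI`, with eigenvalues in `[a, b]`, `0 < a`, and `A h = -‖g‖ e₁`. For any
polynomial `p = 1 + X ψ` of degree `≤ k - 1`, `ψ` has degree `≤ k - 2`, so `e_kᵀ ψ(A) e₁ = 0`
because `A` is tridiagonal; hence `h_k = e_kᵀ p(A) h` and
`|h_k| ≤ ‖p(A)‖ ‖h‖ = max_i |p(μ_i)| ‖h‖`. Choosing for `p` the Chebyshev polynomial of
`[a, b]` normalised at `0` bounds this maximum by `2 ((√κ - 1) / (√κ + 1)) ^ (k - 1)`.
-/

open Polynomial

namespace Polynomial.Chebyshev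

theorem pow_div_two_le_eval_T_real {c : ℝ} (hc : 0 < c) (m : ℕ) :
    c ^ m / 2 ≤ (T ℝ m).eval ((c + c⁻¹) / 2) := by
  have hcosh : (c + c⁻¹) / 2 = Real.cosh (Real.log c) := by
    rw [Real.cosh_eq, Real.exp_neg, Real.exp_log hc]
  rw [hcosh, T_real_cosh, Real.cosh_eq, Int.cast_natCast, Real.exp_nat_mul, Real.exp_log hc]
  have := Real.exp_pos (-(m * Real.log c))
  linarith

theorem exists_eval_zero_eq_one_abs_eval_le_inv_eval_T {a b : ℝ} (ha : 0 ≤ a) (hab : a < b)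
    (m : ℕ) : ∃ p : ℝ[X], p.natDegree ≤ m ∧ p.eval 0 = 1 ∧
      ∀ x ∈ Set.Icc a b, |p.eval x| ≤ ((T ℝ m).eval ((a + b) / (b - a)))⁻¹ := by
  have hba : 0 < b - a := by linarith
  set ℓ : ℝ[X] := Polynomial.C ((a + b) / (b - a)) - Polynomial.C (2 / (b - a)) * X
  have hℓ : ∀ x, ℓ.eval x = (a + b - 2 * x) / (b - a) := fun x => by
    simp only [ℓ, eval_sub, eval_mul, eval_X, eval_C]; ring
  set τ := (T ℝ m).eval ((a + b) / (b - a))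
  have hτ : 1 ≤ τ := one_le_eval_T_real _ <| by rw [le_div_iff₀ hba]; linarith
  refine ⟨Polynomial.C τ⁻¹ * (T ℝ m).comp ℓ, ?_, ?_, fun x ⟨hax, hxb⟩ => ?_⟩
  · calc (Polynomial.C τ⁻¹ * (T ℝ m).comp ℓ).natDegree ≤ (T ℝ m).natDegree * ℓ.natDegree :=
          natDegree_C_mul_le _ _ |>.trans natDegree_comp_le
      _ ≤ m * 1 := by
          gcongr
          · simp [natDegree_T]
          · exact natDegree_sub_le_of_le ((natDegree_C _).trans_le zero_le_one)
              (natDegree_C_mul_le _ _ |>.trans natDegree_X_le)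
      _ = m := mul_one m
  · simp [eval_comp, hℓ, τ, (by linarith : (0:ℝ) < τ).ne']
  · have hℓx : |ℓ.eval x| ≤ 1 := by
      rw [hℓ, abs_le, le_div_iff₀ hba, div_le_one hba]
      constructor <;> linarith
    rw [eval_mul, eval_C, eval_comp, abs_mul, abs_of_pos (by positivity)]
    exact mul_le_of_le_one_right (by positivity) (abs_eval_T_real_le_one _ hℓx)

theorem inv_eval_T_le_two_mul_pow {a b : ℝ} (ha : 0 < a) (hab : a < b) (m : ℕ) :
    ((T ℝ m).eval ((a + b) / (b - a)))⁻¹ ≤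
      2 * ((√(b / a) - 1) / (√(b / a) + 1)) ^ m := by
  set r := √(b / a)
  have hr : 1 < r := Real.lt_sqrt_of_sq_lt <| by rw [one_pow, one_lt_div ha]; exact hab
  have hb : b = a * r ^ 2 := by rw [Real.sq_sqrt (div_pos (ha.trans hab) ha).le]; field_simp
  set c := (r + 1) / (r - 1)
  have hc : 0 < c := div_pos (by linarith) (by linarith)
  -- `(a + b) / (b - a) = cosh (log c)`, where `T_m` grows like `c ^ m / 2`
  have hmid : (a + b) / (b - a) = (c + c⁻¹) / 2 := by
    have : r - 1 ≠ 0 := by linarith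
    have : r + 1 ≠ 0 := by linarith
    have : r ^ 2 - 1 ≠ 0 := by nlinarith
    rw [hb]; simp only [c]; field_simp; ring
  calc ((T ℝ m).eval ((a + b) / (b - a)))⁻¹ ≤ (c ^ m / 2)⁻¹ :=
        inv_anti₀ (by positivity) (hmid ▸ pow_div_two_le_eval_T_real hc m)
    _ = 2 * ((r - 1) / (r + 1)) ^ m := by rw [inv_div, div_eq_mul_inv, ← inv_pow, inv_div]

end Polynomial.Chebyshev

theorem Polynomial.exists_eval_zero_eq_one_abs_eval_le_two_mul_pow {a b : ℝ} (ha : 0 < a)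
    (hab : a ≤ b) (m : ℕ) :
    ∃ p : ℝ[X], p.natDegree ≤ m ∧ p.eval 0 = 1 ∧
      ∀ x ∈ Set.Icc a b, |p.eval x| ≤ 2 * ((√(b / a) - 1) / (√(b / a) + 1)) ^ m := by
  rcases hab.lt_or_eq with hab | rfl
  · obtain ⟨p, hdeg, hp0, hp⟩ :=
      Chebyshev.exists_eval_zero_eq_one_abs_eval_le_inv_eval_T ha.le hab m
    exact ⟨p, hdeg, hp0, fun x hx => (hp x hx).trans (Chebyshev.inv_eval_T_le_two_mul_pow ha hab m)⟩
  · -- the bound is `2 * 0 ^ m`, met by `(1 - X / a) ^ m` even for `m = 0`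
    refine ⟨(1 - C a⁻¹ * X) ^ m, ?_, by simp, fun x hx => ?_⟩
    · have h1 : (1 - C a⁻¹ * X).natDegree ≤ 1 :=
        natDegree_sub_le_of_le (natDegree_one.trans_le zero_le_one)
          (natDegree_C_mul_le _ _ |>.trans natDegree_X_le)
      simpa using natDegree_pow_le_of_le m h1
    · rw [Set.Icc_self, Set.mem_singleton_iff] at hx
      simp only [hx, div_self ha.ne', Real.sqrt_one, sub_self, zero_div, eval_pow, eval_sub,
        eval_one, eval_mul, eval_C, eval_X, inv_mul_cancel₀ ha.ne', abs_pow, abs_zero]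
      linarith [pow_nonneg (le_refl (0 : ℝ)) m]

namespace Matrix

variable {R : Type*} {k : ℕ}

def IsUpperHessenberg [Zero R] (A : Matrix (Fin k) (Fin k) R) : Prop :=
  ∀ i j : Fin k, (j : ℕ) + 1 < i → A i j = 0

theorem IsUpperHessenberg.pow_apply_eq_zero [Semiring R] {A : Matrix (Fin k) (Fin k) R}
    (hA : A.IsUpperHessenberg) (n : ℕ) {i j : Fin k}
    (hij : n + (j : ℕ) < i) : (A ^ n) i j = 0 := by
  induction n generalizing i with
  | zero => exact one_apply_ne (by rintro rfl; omega)
  | succ n ih =>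
    rw [pow_succ', mul_apply]
    refine Finset.sum_eq_zero fun l _ => ?_
    by_cases hl : (l : ℕ) + 1 < i
    · rw [hA i l hl, zero_mul]
    · rw [ih (by omega), mul_zero]

theorem IsUpperHessenberg.aeval_apply_eq_zero [CommSemiring R]
    {A : Matrix (Fin k) (Fin k) R} (hA : A.IsUpperHessenberg)
    {p : R[X]} {i j : Fin k} (hij : p.natDegree + (j : ℕ) < i) : aeval A p i j = 0 := by
  rw [aeval_eq_sum_range, sum_apply]
  refine Finset.sum_eq_zero fun n hn => ?_
  rw [smul_apply, hA.pow_apply_eq_zero n (by simp at hn; omega), smul_zero]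

/-- Writing `p = 1 + X ψ`, the correction `ψ(A) (A h) = c ψ(A) e_j` has no `i`-th entry,
since `ψ` has degree `< i - j` and `A` is upper Hessenberg. -/
theorem IsUpperHessenberg.aeval_mulVec_apply_eq [CommRing R]
    {A : Matrix (Fin k) (Fin k) R} (hA : A.IsUpperHessenberg)
    {h : Fin k → R} {i j : Fin k} {c : R} (hAh : A *ᵥ h = Pi.single j c) (hji : j < i)
    {p : R[X]} (hp0 : p.eval 0 = 1) (hdeg : p.natDegree + j ≤ i) :
    (aeval A p *ᵥ h) i = h i := by
  have hp : p = p.divX * X + 1 := by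
    rw [← C_1, ← hp0, ← coeff_zero_eq_eval_zero, divX_mul_X_add]
  have hψ : aeval A p.divX i j = 0 :=
    hA.aeval_apply_eq_zero <| by
      rw [natDegree_divX_eq_natDegree_tsub_one]; omega
  rw [hp, map_add, map_mul, aeval_X, map_one, add_mulVec, ← mulVec_mulVec, hAh, mulVec_single,
    one_mulVec]
  simp [hψ]

end Matrix

theorem Matrix.PosDef.exists_eval_zero_eq_one_abs_eval_eigenvalues_le {n : Type*}
    [Fintype n] [DecidableEq n] [Nonempty n] {A : Matrix n n ℝ} (hA : A.PosDef) (m : ℕ) :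
    ∃ p : ℝ[X], p.natDegree ≤ m ∧ p.eval 0 = 1 ∧ ∀ i, |p.eval (hA.1.eigenvalues i)| ≤
      2 * ((√((⨆ i, hA.1.eigenvalues i) / ⨅ i, hA.1.eigenvalues i) - 1) /
        (√((⨆ i, hA.1.eigenvalues i) / ⨅ i, hA.1.eigenvalues i) + 1)) ^ m := by
  obtain ⟨i₀, hi₀⟩ := exists_eq_ciInf_of_finite (f := hA.1.eigenvalues)
  have hlo : ∀ i, ⨅ i, hA.1.eigenvalues i ≤ hA.1.eigenvalues i :=
    ciInf_le (Finite.bddBelow_range _)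
  have hhi : ∀ i, hA.1.eigenvalues i ≤ ⨆ i, hA.1.eigenvalues i :=
    le_ciSup (Finite.bddAbove_range _)
  obtain ⟨p, hdeg, hp0, hp⟩ := exists_eval_zero_eq_one_abs_eval_le_two_mul_pow
    (hi₀ ▸ hA.eigenvalues_pos i₀) ((hlo i₀).trans (hhi i₀)) m
  exact ⟨p, hdeg, hp0, fun i => hp _ ⟨hlo i, hhi i⟩⟩

section L2Operator

open scoped Matrix.Norms.L2Operator

theorem EuclideanSpace.norm_toLp_eq_sqrt_dotProduct {n : Type*} [Fintype n] (x : n → ℝ) :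
    ‖(WithLp.toLp 2 x : EuclideanSpace ℝ n)‖ = √(x ⬝ᵥ x) := by
  simp [EuclideanSpace.norm_eq, dotProduct, sq]

namespace Matrix

variable {n : Type*} [Fintype n] [DecidableEq n]

theorem abs_mulVec_apply_le (B : Matrix n n ℝ) (x : n → ℝ) (i : n) :
    |(B *ᵥ x) i| ≤ ‖B‖ * √(x ⬝ᵥ x) := by
  rw [← EuclideanSpace.norm_toLp_eq_sqrt_dotProduct]
  calc |(B *ᵥ x) i| ≤ ‖(WithLp.toLp 2 (B *ᵥ x) : EuclideanSpace ℝ n)‖ :=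
        PiLp.norm_apply_le (WithLp.toLp 2 (B *ᵥ x) : EuclideanSpace ℝ n) i
    _ ≤ ‖B‖ * ‖(WithLp.toLp 2 x : EuclideanSpace ℝ n)‖ := B.l2_opNorm_mulVec (WithLp.toLp 2 x)

theorem IsHermitian.norm_aeval_le {A : Matrix n n ℝ} (hA : A.IsHermitian) {p : ℝ[X]} {M : ℝ}
    (hM₀ : 0 ≤ M) (hM : ∀ i, |p.eval (hA.eigenvalues i)| ≤ M) : ‖aeval A p‖ ≤ M := by
  rw [← cfc_polynomial p A hA.isSelfAdjoint]
  refine norm_cfc_le hM₀ fun x hx => ?_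
  obtain ⟨i, rfl⟩ := hA.spectrum_real_eq_range_eigenvalues ▸ hx
  exact hM i

theorem IsHermitian.abs_apply_le_of_mulVec_eq_single {k : ℕ} {A : Matrix (Fin k) (Fin k) ℝ}
    (hA : A.IsHermitian) (hHess : A.IsUpperHessenberg)
    {h : Fin k → ℝ} {i j : Fin k} {c : ℝ} (hAh : A *ᵥ h = Pi.single j c) (hji : j < i)
    {p : ℝ[X]} (hp0 : p.eval 0 = 1) (hdeg : p.natDegree + j ≤ i) {M : ℝ}
    (hM : ∀ l, |p.eval (hA.eigenvalues l)| ≤ M) : |h i| ≤ M * √(h ⬝ᵥ h) := by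
  calc |h i| = |(aeval A p *ᵥ h) i| := by
        rw [hHess.aeval_mulVec_apply_eq hAh hji hp0 hdeg]
    _ ≤ ‖aeval A p‖ * √(h ⬝ᵥ h) := abs_mulVec_apply_le _ _ _
    _ ≤ M * √(h ⬝ᵥ h) := by
        gcongr
        exact hA.norm_aeval_le ((abs_nonneg _).trans (hM i)) hM

end Matrix

end L2Operator

open Matrix

theorem stmt8 {k : ℕ} (hk : 2 ≤ k)
    (T : Matrix (Fin k) (Fin k) ℝ)
    (htri : ∀ i j : Fin k, ((i:ℕ) + 1 < (j:ℕ) ∨ (j:ℕ) + 1 < (i:ℕ)) → T i j = 0)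
    (lk : ℝ)
    (hpd : (T + lk • 1).PosDef)
    (κk : ℝ) (hκ : κk = (⨆ i, hpd.1.eigenvalues i) / (⨅ i, hpd.1.eigenvalues i))
    (gn : ℝ)
    (h : Fin k → ℝ)
    (hh : h = -(gn • (T + lk • 1)⁻¹.mulVec (Pi.single (⟨0, by omega⟩ : Fin k) 1)))
    (β : ℝ) (hβ : 0 < β) :
    β * |(Pi.single (⟨k-1, by omega⟩ : Fin k) (1:ℝ)) ⬝ᵥ h| ≤
      2 * β * Real.sqrt (h ⬝ᵥ h) *
        ((Real.sqrt κk - 1) / (Real.sqrt κk + 1))^(k-1) := by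
  have hHess : (T + lk • 1).IsUpperHessenberg := fun i j hij => by
    rw [Matrix.add_apply, htri i j (Or.inr hij), Matrix.smul_apply,
      one_apply_ne (by rintro rfl; omega), smul_zero, add_zero]
  have hAh : (T + lk • 1) *ᵥ h = Pi.single ⟨0, by omega⟩ (-gn) := by
    rw [hh, mulVec_neg, mulVec_smul, mulVec_mulVec,
      mul_nonsing_inv _ ((isUnit_iff_isUnit_det _).mp hpd.isUnit), one_mulVec,
      ← Pi.single_smul', smul_eq_mul, mul_one, Pi.single_neg]
  have : Nonempty (Fin k) := ⟨⟨0, by omega⟩⟩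
  obtain ⟨p, hdeg, hp0, hp⟩ := hpd.exists_eval_zero_eq_one_abs_eval_eigenvalues_le (k - 1)
  have hlast := hpd.1.abs_apply_le_of_mulVec_eq_single hHess hAh (i := ⟨k - 1, by omega⟩)
    (by simp only [Fin.mk_lt_mk]; omega) hp0 (by simpa using hdeg) (hκ ▸ hp)
  rw [single_dotProduct, one_mul]
  linarith [mul_le_mul_of_nonneg_left hlast hβ.le]
end
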